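/- arXiv:2311.08020 — 2 statements merged into one kernel-verified Lean document; each statement's English description precedes it below -/
import Mathlib

section
/- The sum over all permutations σ of S_n of q raised to the number of non-inversions (pairs i < j with σ(i) < σ(j)) equals the q-factorial [n]_q!. -/
/-- The q-integer `[m]_q = 1 + q + ⋯ + q^{m-1}` as a polynomial in `q` over `ℤ`. -/
noncomputable def qint (m : ℕ) : Polynomial ℤ := ∑ i ∈ Finset.range m, Polynomial.X ^ i

/-- The q-factorial `[n]_q! = [n]_q [n-1]_q ⋯ [1]_q`. -/
noncomputable def qfact : ℕ → Polynomial ℤ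
  | 0 => 1
  | n + 1 => qint (n + 1) * qfact n

/-- The number of non-inversions of a permutation `σ ∈ S_n`: pairs `i < j` with
`σ(i) < σ(j)`. -/
noncomputable def nonInv {n : ℕ} (σ : Equiv.Perm (Fin n)) : ℕ :=
  Nat.card {p : Fin n × Fin n // p.1 < p.2 ∧ σ p.1 < σ p.2}

open Finset Polynomial Equiv

lemma nonInv_eq_sum {n : ℕ} (σ : Equiv.Perm (Fin n)) :
    nonInv σ = ∑ a : Fin n, ∑ b : Fin n, if a < b ∧ σ a < σ b then 1 else 0 := by
  rw [nonInv, Nat.card_eq_fintype_card, Fintype.card_subtype, Finset.card_filter,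
    ← Finset.univ_product_univ, Finset.sum_product]

/-- Insertion of a value `p` at the front. -/
noncomputable def ins {n : ℕ} (p : Fin (n + 1)) (e : Equiv.Perm (Fin n)) :
    Equiv.Perm (Fin (n + 1)) :=
  (finSuccEquiv n).trans ((Equiv.optionCongr e).trans (finSuccEquiv' p).symm)

lemma ins_zero {n : ℕ} (p : Fin (n + 1)) (e : Equiv.Perm (Fin n)) : ins p e 0 = p := by
  simp [ins]

lemma ins_succ {n : ℕ} (p : Fin (n + 1)) (e : Equiv.Perm (Fin n)) (j : Fin n) :
    ins p e j.succ = p.succAbove (e j) := by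
  simp [ins]

lemma ins_injective {n : ℕ} :
    Function.Injective (fun pe : Fin (n + 1) × Equiv.Perm (Fin n) => ins pe.1 pe.2) := by
  rintro ⟨p, e⟩ ⟨p', e'⟩ h
  simp only at h
  have hp : p = p' := by rw [← ins_zero p e, ← ins_zero p' e', h]
  subst hp
  have he : e = e' := Equiv.ext fun j => by
    have := congrArg (fun τ : Equiv.Perm (Fin (n+1)) => τ j.succ) h
    simp only [ins_succ] at this
    exact Fin.succAbove_right_injective this
  rw [he]

lemma ins_bijective {n : ℕ} :
    Function.Bijective (fun pe : Fin (n + 1) × Equiv.Perm (Fin n) => ins pe.1 pe.2) := by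
  rw [Fintype.bijective_iff_injective_and_card]
  refine ⟨ins_injective, ?_⟩
  simp [Fintype.card_perm, Nat.factorial_succ]

lemma count_ge {n : ℕ} (k : ℕ) :
    (∑ j : Fin n, if k ≤ (j : ℕ) then 1 else 0) = n - k := by
  rw [Fin.sum_univ_eq_sum_range (fun i => if k ≤ i then 1 else 0)]
  induction n with
  | zero => simp
  | succ m ih =>
    rw [Finset.sum_range_succ, ih]
    by_cases h : k ≤ m
    · rw [if_pos h]; omega
    · rw [if_neg h]; omega

lemma nonInv_ins {n : ℕ} (p : Fin (n + 1)) (e : Equiv.Perm (Fin n)) :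
    nonInv (ins p e) = (n - (p : ℕ)) + nonInv e := by
  rw [nonInv_eq_sum, nonInv_eq_sum]
  rw [Fin.sum_univ_succ]
  have h0 : (∑ b : Fin (n + 1), if (0 : Fin (n+1)) < b ∧ ins p e 0 < ins p e b then 1 else 0)
      = n - (p : ℕ) := by
    rw [Fin.sum_univ_succ]
    simp only [lt_self_iff_false, false_and, if_false, zero_add]
    have : ∀ j : Fin n, (if (0 : Fin (n+1)) < j.succ ∧ ins p e 0 < ins p e j.succ then 1 else 0)
        = if (p : ℕ) ≤ ((e j) : ℕ) then 1 else 0 := by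
      intro j
      rw [ins_zero, ins_succ]
      congr 1
      simp only [Fin.succ_pos, true_and, eq_iff_iff]
      rw [Fin.lt_succAbove_iff_le_castSucc, Fin.le_castSucc_iff, Fin.lt_def, Fin.val_succ]
      omega
    rw [Finset.sum_congr rfl (fun j _ => this j)]
    exact (Equiv.sum_comp e (fun j => if (p : ℕ) ≤ (j : ℕ) then 1 else 0)).trans
      (count_ge (p : ℕ))
  rw [h0]
  congr 1
  have : ∀ i : Fin n, (∑ b : Fin (n+1),
      if i.succ < b ∧ ins p e i.succ < ins p e b then 1 else 0)
      = ∑ b : Fin n, if i < b ∧ e i < e b then 1 else 0 := by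
    intro i
    rw [Fin.sum_univ_succ]
    have h1 : ¬ (i.succ < (0 : Fin (n+1)) ∧ ins p e i.succ < ins p e 0) := by
      intro h; exact absurd h.1 (Fin.not_lt_zero _ : ¬ i.succ < 0)
    rw [if_neg h1, zero_add]
    refine Finset.sum_congr rfl (fun j _ => ?_)
    congr 1
    rw [ins_succ, ins_succ, Fin.succ_lt_succ_iff, Fin.succAbove_lt_succAbove_iff]
  exact Finset.sum_congr rfl (fun i _ => this i)

/-- `∑_{σ ∈ S_n} q^{noninv(σ)} = [n]_q!`. -/
theorem sum_perm_qpow_nonInv_eq_qfact (n : ℕ) :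
    ∑ σ : Equiv.Perm (Fin n), (Polynomial.X : Polynomial ℤ) ^ nonInv σ = qfact n := by
  induction n with
  | zero =>
    have : ∀ σ : Equiv.Perm (Fin 0), nonInv σ = 0 := by
      intro σ
      rw [nonInv]
      exact Nat.card_of_isEmpty
    simp [qfact, this]
  | succ m ih =>
    rw [← Fintype.sum_bijective _ ins_bijective _ _ (fun pe => rfl)]
    rw [← Finset.univ_product_univ, Finset.sum_product]
    have : ∀ p : Fin (m + 1), (∑ e : Equiv.Perm (Fin m),
        (Polynomial.X : Polynomial ℤ) ^ nonInv (ins p e))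
        = X ^ (m - (p : ℕ)) * qfact m := by
      intro p
      rw [← ih, Finset.mul_sum]
      exact Finset.sum_congr rfl (fun e _ => by rw [nonInv_ins, pow_add])
    rw [Finset.sum_congr rfl (fun p _ => this p), ← Finset.sum_mul]
    show (∑ p : Fin (m+1), (X:Polynomial ℤ) ^ (m - (p:ℕ))) * qfact m = qfact (m+1)
    have hq : (∑ p : Fin (m+1), (X:Polynomial ℤ) ^ (m - (p:ℕ))) = qint (m+1) := by
      rw [Fin.sum_univ_eq_sum_range (fun i => (X:Polynomial ℤ) ^ (m - i)), qint]
      have := Finset.sum_range_reflect (fun i => (X:Polynomial ℤ) ^ i) (m+1)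
      rw [← this]
      simp
    rw [hq]
    rfl
end

section
/- Let G = ([n], E) be a natural unit interval graph and let T be a subtree of G containing a cut vertex c of G separating vertices ≤ c from vertices > c. If T is decreasing (every vertex except the maximum has exactly one larger neighbour in T), then the tree list σ = list(T) consists of all vertices of T that are at most c, in some order, followed by all vertices of T strictly greater than c, in some order. -/
/-- `G` is a natural unit interval graph: for `i < j < k`, if `{i,k}` is an edge then so
are `{i,j}` and `{j,k}`. -/
def IsNUIG {n : ℕ} (G : SimpleGraph (Fin n)) : Prop :=
  ∀ i j k : Fin n, i < j → j < k → G.Adj i k → G.Adj i j ∧ G.Adj j k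

/-- A subgraph `T` of `G` is a decreasing subtree if it is a tree and every vertex having
a larger vertex in `T` has exactly one larger neighbour in `T`. -/
def IsDecreasingTree {n : ℕ} (G : SimpleGraph (Fin n)) (T : G.Subgraph) : Prop :=
  T.verts.Nonempty ∧ T.coe.IsTree ∧
    ∀ v ∈ T.verts, (∃ u ∈ T.verts, v < u) → ∃! w : Fin n, v < w ∧ T.Adj v w

/-- `l` is the reading order `list(T)` of the subtree `T`: a duplicate-free listing of the
vertices of `T`, starting with the smallest vertex, such that each subsequent entry is the
smallest not-yet-read vertex of `T` adjacent in `T` to an already-read vertex. -/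
def IsReadList {n : ℕ} {G : SimpleGraph (Fin n)} (T : G.Subgraph) (l : List (Fin n)) :
    Prop :=
  l.Nodup ∧ (∀ v : Fin n, v ∈ l ↔ v ∈ T.verts) ∧
    (∀ h0 : 0 < l.length, ∀ v ∈ T.verts, l.get ⟨0, h0⟩ ≤ v) ∧
    ∀ t : ℕ, ∀ ht : t < l.length, 0 < t →
      IsLeast {v : Fin n | v ∈ T.verts ∧ v ∉ l.take t ∧ ∃ u ∈ l.take t, T.Adj u v}
        (l.get ⟨t, ht⟩)

/-!
Capping every vertex at `c`, i.e. passing from `x` to `min x c`, sends each edge of `T` to an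
edge of `T` between vertices `≤ c` or collapses it to a point, because an edge across the cut
has `c` as an endpoint. Hence the vertices of `T` below `c` are connected through vertices
below `c`. If some `l[s] > c` is read while a vertex `≤ c` is still unread, one such unread
vertex is adjacent to an already read one, and it would have been read before `l[s]`.
-/

open SimpleGraph

section CapAtCut

variable {α : Type*} [LinearOrder α] {H : SimpleGraph α} {c : α}

theorem min_eq_or_adj_min_of_adj (hcut : ∀ u v, u < c → c < v → ¬ H.Adj u v)
    {x y : α} (hxy : H.Adj x y) : min x c = min y c ∨ H.Adj (min x c) (min y c) := by
  rcases le_or_gt x c with hx | hx <;> rcases le_or_gt y c with hy | hy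
  · right
    rwa [min_eq_left hx, min_eq_left hy]
  · left
    have hxc : x = c := hx.eq_of_not_lt fun hlt => hcut x y hlt hy hxy
    rw [min_eq_left hx, min_eq_right hy.le, hxc]
  · left
    have hyc : y = c := hy.eq_of_not_lt fun hlt => hcut y x hlt hx hxy.symm
    rw [min_eq_right hx.le, min_eq_left hy, hyc]
  · left
    rw [min_eq_right hx.le, min_eq_right hy.le]

theorem min_mem_of_reachable (hcut : ∀ u v, u < c → c < v → ¬ H.Adj u v) {R : Set α}
    (hR : ∀ u v, u ∈ R → H.Adj u v → v ≤ c → v ∈ R) {x z : α} (hxz : H.Reachable x z)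
    (hx : min x c ∈ R) : min z c ∈ R := by
  rw [reachable_iff_reflTransGen] at hxz
  induction hxz with
  | refl => exact hx
  | tail _ hyz ih =>
    rcases min_eq_or_adj_min_of_adj hcut hyz with h | h
    · exact h ▸ ih
    · exact hR _ _ ih h (min_le_right _ _)

end CapAtCut

theorem IsReadList.getElem_le_of_adj {n : ℕ} {G : SimpleGraph (Fin n)} {T : G.Subgraph}
    {l : List (Fin n)} (hl : IsReadList T l) {s : ℕ} (hs : s < l.length) (hs0 : 0 < s)
    {u v : Fin n} (hu : u ∈ l.take s) (huv : T.Adj u v) (hv : v ∉ l.take s) : l[s] ≤ v :=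
  (hl.2.2.2 s hs hs0).2 ⟨T.edge_vert huv.symm, hv, u, hu, huv⟩

theorem List.Nodup.lt_of_getElem_mem_take {β : Type*} {l : List β} (hl : l.Nodup) {s t : ℕ}
    (ht : t < l.length) (hmem : l[t] ∈ l.take s) : t < s := by
  obtain ⟨i, hi, hieq⟩ := List.mem_take_iff_getElem.mp hmem
  have hit : i = t := hl.getElem_inj_iff.mp hieq
  omega

theorem readList_cut_vertex_general {n : ℕ} (G : SimpleGraph (Fin n))
    (T : G.Subgraph) (hT : IsDecreasingTree G T) (c : Fin n) (hc : c ∈ T.verts)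
    (hcut : ∀ u v : Fin n, u < c → c < v → ¬ G.Adj u v)
    (l : List (Fin n)) (hl : IsReadList T l) :
    ∀ s t : Fin l.length, s ≤ t → l.get t ≤ c → l.get s ≤ c := by
  intro s t hst htc
  by_contra! hsc
  simp only [List.get_eq_getElem] at htc hsc
  have h0 : 0 < l.length := s.pos
  have hfirst : l[0] ≤ c := hl.2.2.1 h0 c hc
  have hs0 : 0 < s.val := Nat.pos_of_ne_zero fun h => by
    obtain rfl : s = ⟨0, h0⟩ := Fin.ext h
    exact hfirst.not_gt hsc
  have hcutT : ∀ u v, u < c → c < v → ¬ T.spanningCoe.Adj u v :=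
    fun u v huc hcv huv => hcut u v huc hcv (T.adj_sub huv)
  have hclosed : ∀ u v, u ∈ l.take s → T.spanningCoe.Adj u v → v ≤ c → v ∈ l.take s :=
    fun u v hu huv hvc => by_contra fun hv =>
      (hl.getElem_le_of_adj s.isLt hs0 hu huv hv).trans hvc |>.not_gt hsc
  have hreach : T.spanningCoe.Reachable l[0] l[t.val] :=
    (hT.2.1.connected.preconnected ⟨_, (hl.2.1 _).mp (l.getElem_mem h0)⟩
      ⟨_, (hl.2.1 _).mp (l.get_mem t)⟩).map ⟨Subtype.val, id⟩
  have hread : min l[t.val] c ∈ l.take s :=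
    min_mem_of_reachable (R := {v | v ∈ l.take s}) hcutT hclosed hreach <| by
      rw [min_eq_left hfirst]
      exact List.mem_take_iff_getElem.mpr ⟨0, by omega, rfl⟩
  rw [min_eq_left htc] at hread
  exact (hl.1.lt_of_getElem_mem_take t.isLt hread).not_ge hst

/-- if `T` is a decreasing subtree of a natural unit interval graph `G`
containing a cut vertex `c` (no edge of `G` joins a vertex `< c` to a vertex `> c`), then
the tree list of `T` lists all vertices `≤ c` before all vertices `> c`. -/
theorem readList_cut_vertex {n : ℕ} (G : SimpleGraph (Fin n)) (hG : IsNUIG G)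
    (T : G.Subgraph) (hT : IsDecreasingTree G T) (c : Fin n) (hc : c ∈ T.verts)
    (hcut : ∀ u v : Fin n, u < c → c < v → ¬ G.Adj u v)
    (l : List (Fin n)) (hl : IsReadList T l) :
    ∀ s t : Fin l.length, s ≤ t → l.get t ≤ c → l.get s ≤ c :=
  readList_cut_vertex_general G T hT c hc hcut l hl
end
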